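/- Let n ≥ 2, let N = ⌊n/2⌋, and let z = (σ_1 σ_2 ⋯ σ_{n-1})^n be the full twist element of B_n. The set Z_n = {σ_1^{n(n-1)} z⁻¹, σ_3^{n(n-1)} z⁻¹, …, σ_{2N-1}^{n(n-1)} z⁻¹} is contained in the commutator subgroup B_n' and is a totally symmetric subset of B_n': its elements commute pairwise, and every permutation of Z_n is achieved by conjugation by an element of B_n'. -/

import Mathlib

/-- The braid relations on generators indexed by `Fin (n-1)` (generator `i`
represents the standard generator `σ_{i+1}`). -/
def braidRels (n : ℕ) : Set (FreeGroup (Fin (n - 1))) :=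
  {r | (∃ i j : Fin (n - 1), (i : ℕ) + 1 = (j : ℕ) ∧
        r = FreeGroup.of i * FreeGroup.of j * FreeGroup.of i *
            (FreeGroup.of j * FreeGroup.of i * FreeGroup.of j)⁻¹) ∨
      (∃ i j : Fin (n - 1), (i : ℕ) + 2 ≤ (j : ℕ) ∧
        r = FreeGroup.of i * FreeGroup.of j * (FreeGroup.of j * FreeGroup.of i)⁻¹)}

/-- The braid group on `n` strands. -/
abbrev BraidGroup (n : ℕ) : Type := PresentedGroup (braidRels n)

/-- The standard generator `σ_{i+1}` of the braid group `B_n`. -/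
def σ {n : ℕ} (i : Fin (n - 1)) : BraidGroup n := PresentedGroup.of i

/-- The full twist `z = (σ_1 ⋯ σ_{n-1})^n`, generating the center of `B_n`. -/
def fullTwist (n : ℕ) : BraidGroup n := ((List.ofFn fun i : Fin (n - 1) => σ i).prod) ^ n

/-- A subset `X` of a group `G` is totally symmetric with respect to a subgroup
`H` if its elements commute pairwise and every permutation of `X` is achieved by
conjugation by a single element of `H`. -/
def IsTotallySymmetricWrt {G : Type*} [Group G] (X : Set G) (H : Subgroup G) : Prop :=
  (∀ x ∈ X, ∀ y ∈ X, Commute x y) ∧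
  ∀ τ : X ≃ X, ∃ g ∈ H, ∀ x : X, g * (x : G) * g⁻¹ = (τ x : G)

namespace BraidAux

variable {n : ℕ}

lemma mk_rel_one {r : FreeGroup (Fin (n-1))} (hr : r ∈ braidRels n) :
    PresentedGroup.mk (braidRels n) r = 1 :=
  (QuotientGroup.eq_one_iff r).mpr (Subgroup.subset_normalClosure hr)

lemma mk_of (i : Fin (n-1)) :
    PresentedGroup.mk (braidRels n) (FreeGroup.of i) = σ i := rfl

lemma braid_rel (i j : Fin (n-1)) (h : (i:ℕ)+1 = j) :
    σ i * σ j * σ i = σ j * σ i * σ j := by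
  have h1 := mk_rel_one (n := n) (Or.inl ⟨i, j, h, rfl⟩)
  rw [map_mul, map_mul, map_mul, map_inv, map_mul, map_mul, mk_of, mk_of] at h1
  exact mul_inv_eq_one.mp h1

lemma comm_rel (i j : Fin (n-1)) (h : (i:ℕ)+2 ≤ j) :
    σ i * σ j = σ j * σ i := by
  have h1 := mk_rel_one (n := n) (Or.inr ⟨i, j, h, rfl⟩)
  rw [map_mul, map_inv, map_mul, map_mul, mk_of, mk_of] at h1
  exact mul_inv_eq_one.mp h1

/-- `sg n m` is the generator `σ_{m+1}` (0-indexed `m`), or `1` if out of range. -/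
def sg (n : ℕ) (m : ℕ) : BraidGroup n := if h : m < n - 1 then σ ⟨m, h⟩ else 1

lemma sg_eq (m : ℕ) (h : m < n-1) : sg n m = σ ⟨m, h⟩ := dif_pos h

lemma sg_eq_one {m : ℕ} (h : ¬ m < n-1) : sg n m = 1 := dif_neg h

lemma sg_braid (m : ℕ) (h : m + 2 < n) :
    sg n m * sg n (m+1) * sg n m = sg n (m+1) * sg n m * sg n (m+1) := by
  rw [sg_eq m (by omega), sg_eq (m+1) (by omega)]
  exact braid_rel _ _ rfl

lemma sg_comm {m j : ℕ} (h : m + 2 ≤ j) : Commute (sg n m) (sg n j) := by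
  by_cases hj : j < n - 1
  · rw [sg_eq m (by omega), sg_eq j hj]
    exact comm_rel ⟨m, by omega⟩ ⟨j, hj⟩ h
  · rw [sg_eq_one hj]; exact Commute.one_right _

/-- prefix product `σ_1 ⋯ σ_k`. -/
def dp (n k : ℕ) : BraidGroup n := ((List.range k).map (sg n)).prod

lemma dp_zero : dp n 0 = 1 := rfl

lemma dp_succ (k : ℕ) : dp n (k+1) = dp n k * sg n k := by
  rw [dp, dp, List.range_succ, List.map_append, List.prod_append]
  simp

lemma comm_sg_prod {j : ℕ} {l : List ℕ} (h : ∀ x ∈ l, x + 2 ≤ j ∨ j + 2 ≤ x) :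
    Commute ((l.map (sg n)).prod) (sg n j) := by
  induction l with
  | nil => simpa using Commute.one_left _
  | cons a t ih =>
      rw [List.map_cons, List.prod_cons]
      refine Commute.mul_left ?_ (ih fun x hx => h x (List.mem_cons_of_mem _ hx))
      rcases h a List.mem_cons_self with h' | h'
      · exact sg_comm h'
      · exact (sg_comm h').symm

lemma comm_dp_sg {m j : ℕ} (h : m + 1 ≤ j) : Commute (dp n m) (sg n j) := by
  refine comm_sg_prod fun x hx => ?_
  rw [List.mem_range] at hx
  omega

lemma shift {m k : ℕ} (h2 : m + 2 ≤ k) (h3 : m + 2 < n) :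
    dp n k * sg n m = sg n (m+1) * dp n k := by
  induction k, h2 using Nat.le_induction with
  | base =>
      have hb := sg_braid (n := n) m h3
      have hbr : sg n m * (sg n (m+1) * sg n m) = sg n (m+1) * (sg n m * sg n (m+1)) := by
        rw [← mul_assoc, hb, mul_assoc]
      have hc : Commute (dp n m) (sg n (m+1)) := comm_dp_sg (by omega)
      simp only [dp_succ, mul_assoc]
      rw [hbr, ← mul_assoc, hc.eq, mul_assoc]
  | succ k hk ih =>
      have hc : Commute (sg n m) (sg n k) := sg_comm (by omega)
      calc dp n (k+1) * sg n m = dp n k * (sg n k * sg n m) := by rw [dp_succ]; simp [mul_assoc]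
        _ = dp n k * sg n m * sg n k := by rw [← hc.eq]; simp [mul_assoc]
        _ = sg n (m+1) * dp n k * sg n k := by rw [ih]
        _ = sg n (m+1) * dp n (k+1) := by rw [dp_succ]; simp [mul_assoc]

/-- the element `δ = σ_1 ⋯ σ_{n-1}`. -/
def del (n : ℕ) : BraidGroup n := dp n (n-1)

lemma fullTwist_eq : fullTwist n = del n ^ n := by
  unfold fullTwist del dp
  congr 2
  apply List.ext_getElem (by simp)
  intro i h1 h2
  simp only [List.getElem_ofFn, List.getElem_map, List.getElem_range]
  rw [sg_eq i (by simpa using h2)]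

lemma pow_shift {j : ℕ} (h : j ≤ n - 2) :
    del n ^ j * sg n 0 = sg n j * del n ^ j := by
  induction j with
  | zero => simp
  | succ j ih =>
      have hj : j ≤ n - 2 := by omega
      calc del n ^ (j+1) * sg n 0 = del n * (del n ^ j * sg n 0) := by
            rw [pow_succ']; simp [mul_assoc]
        _ = del n * sg n j * del n ^ j := by rw [ih hj]; simp [mul_assoc]
        _ = sg n (j+1) * del n * del n ^ j := by
            rw [show del n * sg n j = sg n (j+1) * del n from shift (by omega) (by omega)]
        _ = sg n (j+1) * del n ^ (j+1) := by rw [pow_succ']; simp [mul_assoc]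

lemma del_dp (hn : 2 ≤ n) : del n * dp n (n-2) = (sg n 0)⁻¹ * del n ^ 2 := by
  have key : ∀ j, j ≤ n - 2 →
      del n * dp n j = ((List.range' 1 j).map (sg n)).prod * del n := by
    intro j hj
    induction j with
    | zero => simp [dp]
    | succ j ih =>
        have e1 : del n * dp n j = ((List.range' 1 j).map (sg n)).prod * del n := ih (by omega)
        calc del n * dp n (j+1) = del n * dp n j * sg n j := by rw [dp_succ]; simp [mul_assoc]
          _ = ((List.range' 1 j).map (sg n)).prod * (del n * sg n j) := by
                rw [e1]; simp [mul_assoc]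
          _ = ((List.range' 1 j).map (sg n)).prod * (sg n (j+1) * del n) := by
                rw [show del n * sg n j = sg n (j+1) * del n from shift (by omega) (by omega)]
          _ = ((List.range' 1 (j+1)).map (sg n)).prod * del n := by
                rw [List.range'_concat]
                simp [mul_assoc, Nat.add_comm 1 j]
  have h2 := key (n-2) le_rfl
  have haux : ∀ k, dp n (k+1) = sg n 0 * ((List.range' 1 k).map (sg n)).prod := by
    intro k
    rw [dp, List.range_eq_range', List.range'_succ]
    simp
  have h3 : dp n (n-1) = sg n 0 * ((List.range' 1 (n-2)).map (sg n)).prod := by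
    rw [show dp n (n-1) = dp n ((n-2)+1) from by congr 1; omega, haux]
  have h4 : ((List.range' 1 (n-2)).map (sg n)).prod = (sg n 0)⁻¹ * del n := by
    rw [del, h3]; group
  rw [h2, h4, sq]
  group

lemma key2 (hn : 2 ≤ n) : del n ^ 2 * sg n (n-2) = sg n 0 * del n ^ 2 := by
  have h1 : del n = dp n (n-2) * sg n (n-2) := by
    rw [show del n = dp n ((n-2)+1) from by rw [del]; congr 1; omega, dp_succ]
  have h2 := del_dp hn
  have hs : sg n (n-2) = (dp n (n-2))⁻¹ * del n := by rw [h1]; group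
  have hd : dp n (n-2) = (del n)⁻¹ * ((sg n 0)⁻¹ * del n ^ 2) := by
    rw [← h2]; group
  rw [hs, hd, sq]; group

lemma del_pow_comm (hn : 2 ≤ n) (m : ℕ) : Commute (del n ^ n) (sg n m) := by
  by_cases hm : m < n - 1
  · have h0 : Commute (del n ^ n) (sg n 0) := by
      have e1 : del n ^ n = del n ^ 2 * del n ^ (n-2) := by rw [← pow_add]; congr 1; omega
      have : del n ^ n * sg n 0 = sg n 0 * del n ^ n := by
        rw [e1, mul_assoc, pow_shift le_rfl, ← mul_assoc, key2 hn, mul_assoc]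
      exact this
    have hsm : sg n m = del n ^ m * sg n 0 * (del n ^ m)⁻¹ := by
      rw [pow_shift (by omega)]; group
    have hc : Commute (del n ^ n) (del n ^ m) := (Commute.refl _).pow_pow _ _
    rw [hsm]
    exact (hc.mul_right h0).mul_right hc.inv_right
  · rw [sg_eq_one hm]; exact Commute.one_right _

lemma fullTwist_central (hn : 2 ≤ n) (g : BraidGroup n) : Commute (fullTwist n) g := by
  rw [fullTwist_eq]
  obtain ⟨w, rfl⟩ := PresentedGroup.mk_surjective (braidRels n) g
  induction w using FreeGroup.induction_on with
  | C1 => rw [map_one]; exact Commute.one_right _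
  | of x =>
      have hx : PresentedGroup.mk (braidRels n) (FreeGroup.of x) = sg n x.1 := by
        rw [sg_eq x.1 x.2]; rfl
      rw [hx]; exact del_pow_comm hn x.1
  | inv_of x ih => rw [map_inv]; exact ih.inv_right
  | mul x y ihx ihy => rw [map_mul]; exact ihx.mul_right ihy

end BraidAux

namespace BraidAux

variable {n : ℕ}

/-- exponent-sum homomorphism. -/
def deg (n : ℕ) : BraidGroup n →* Multiplicative ℤ :=
  PresentedGroup.toGroup (f := fun _ : Fin (n-1) => Multiplicative.ofAdd (1 : ℤ)) (by
    intro r hr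
    rcases hr with ⟨i, j, -, rfl⟩ | ⟨i, j, -, rfl⟩ <;> · simp)

lemma deg_of (i : Fin (n-1)) : deg n (σ i) = Multiplicative.ofAdd (1 : ℤ) :=
  PresentedGroup.toGroup.of _

lemma deg_sg {m : ℕ} (h : m < n-1) : deg n (sg n m) = Multiplicative.ofAdd (1 : ℤ) := by
  rw [sg_eq m h, deg_of]

lemma deg_dp {k : ℕ} (h : k ≤ n-1) : deg n (dp n k) = Multiplicative.ofAdd (k : ℤ) := by
  induction k with
  | zero => simp [dp]
  | succ k ih =>
      rw [dp_succ, map_mul, ih (by omega), deg_sg (by omega), ← ofAdd_add]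
      norm_cast

lemma deg_fullTwist : deg n (fullTwist n) = Multiplicative.ofAdd ((n : ℤ) * ((n:ℤ) - 1)) := by
  rcases Nat.eq_zero_or_pos n with h0 | h0
  · subst h0; simp [fullTwist]
  rw [fullTwist_eq, map_pow, del, deg_dp le_rfl, ← ofAdd_nsmul]
  congr 1
  have : ((n - 1 : ℕ) : ℤ) = (n : ℤ) - 1 := by
    omega
  rw [this]
  ring

lemma mem_commutator_of_deg_one (hn : 2 ≤ n) (g : BraidGroup n) (hg : deg n g = 1) :
    g ∈ commutator (BraidGroup n) := by
  set i0 : Fin (n-1) := ⟨0, by omega⟩ with hi0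
  have key : ∀ v (hv : v < n-1),
      Abelianization.of (σ (n := n) ⟨v, hv⟩) = Abelianization.of (σ i0) := by
    intro v
    induction v with
    | zero => intro hv; rfl
    | succ v ih =>
        intro hv
        have hb := braid_rel (n := n) ⟨v, by omega⟩ ⟨v+1, hv⟩ rfl
        have h2 := congrArg (Abelianization.of (G := BraidGroup n)) hb
        simp only [map_mul] at h2
        set A := Abelianization.of (σ (n := n) ⟨v, by omega⟩) with hA
        set B := Abelianization.of (σ (n := n) ⟨v+1, hv⟩) with hB
        have h3 : (A * B) * A = (A * B) * B := by
          rw [h2, mul_comm B A]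
        have h4 : A = B := mul_left_cancel h3
        rw [← h4]
        exact ih (by omega)
  have hcomp : (zpowersHom (Abelianization (BraidGroup n))
      (Abelianization.of (σ i0))).comp (deg n) = Abelianization.of := by
    apply PresentedGroup.ext
    intro x
    have hx : Abelianization.of (σ (n := n) x) = Abelianization.of (σ i0) := by
      have := key x.1 x.2
      simpa using this
    simp only [MonoidHom.comp_apply]
    rw [show PresentedGroup.of (rels := braidRels n) x = σ x from rfl, deg_of, hx]
    simp
  have h5 : Abelianization.of g = 1 := by
    have := DFunLike.congr_fun hcomp g
    simp only [MonoidHom.comp_apply] at this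
    rw [← this, hg, map_one]
  exact (QuotientGroup.eq_one_iff g).mp h5

/-- the block swap element. -/
def ww (n m : ℕ) : BraidGroup n := sg n (m+1) * sg n m * sg n (m+2) * sg n (m+1)

lemma ww_conj1 {m : ℕ} (h : m + 4 ≤ n) : ww n m * sg n m = sg n (m+2) * ww n m := by
  have hb1 := sg_braid (n := n) m (by omega)
  have hb2 := sg_braid (n := n) (m+1) (by omega)
  have hc : Commute (sg n m) (sg n (m+2)) := sg_comm (by omega)
  have hb1r : ∀ x : BraidGroup n, sg n m * (sg n (m+1) * (sg n m * x))
      = sg n (m+1) * (sg n m * (sg n (m+1) * x)) := by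
    intro x
    rw [← mul_assoc, ← mul_assoc, hb1, mul_assoc, mul_assoc]
  have hb2r : ∀ x : BraidGroup n, sg n (m+1) * (sg n (m+2) * (sg n (m+1) * x))
      = sg n (m+2) * (sg n (m+1) * (sg n (m+2) * x)) := by
    intro x
    rw [← mul_assoc, ← mul_assoc, hb2, mul_assoc, mul_assoc]
  have hcr : ∀ x : BraidGroup n, sg n m * (sg n (m+2) * x) = sg n (m+2) * (sg n m * x) := by
    intro x
    rw [← mul_assoc, hc.eq, mul_assoc]
  have hb1t : sg n m * (sg n (m+1) * sg n m) = sg n (m+1) * (sg n m * sg n (m+1)) := by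
    rw [← mul_assoc, hb1, mul_assoc]
  simp only [ww, mul_assoc]
  rw [hcr, hb1t, hb2r, ← hcr]

lemma ww_conj2 {m : ℕ} (h : m + 4 ≤ n) : ww n m * sg n (m+2) = sg n m * ww n m := by
  have hb1 := sg_braid (n := n) m (by omega)
  have hb2 := sg_braid (n := n) (m+1) (by omega)
  have hb2t : sg n (m+1) * (sg n (m+2) * sg n (m+1)) = sg n (m+2) * (sg n (m+1) * sg n (m+2)) := by
    rw [← mul_assoc, hb2, mul_assoc]
  have hb1rr : ∀ x : BraidGroup n, sg n (m+1) * (sg n m * (sg n (m+1) * x))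
      = sg n m * (sg n (m+1) * (sg n m * x)) := by
    intro x
    rw [← mul_assoc, ← mul_assoc, ← hb1, mul_assoc, mul_assoc]
  simp only [ww, mul_assoc]
  rw [← hb2t, hb1rr]

lemma ww_comm_far {m b : ℕ} (h : b + 2 ≤ m ∨ m + 4 ≤ b) :
    Commute (ww n m) (sg n b) := by
  have c1 : Commute (sg n (m+1)) (sg n b) := by
    rcases h with h | h
    · exact (sg_comm (by omega)).symm
    · exact sg_comm (by omega)
  have c0 : Commute (sg n m) (sg n b) := by
    rcases h with h | h
    · exact (sg_comm (by omega)).symm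
    · exact sg_comm (by omega)
  have c2 : Commute (sg n (m+2)) (sg n b) := by
    rcases h with h | h
    · exact (sg_comm (by omega)).symm
    · exact sg_comm (by omega)
  exact ((c1.mul_left c0).mul_left c2).mul_left c1 |>.symm |>.symm
  
end BraidAux

namespace BraidAux

variable {n : ℕ}

lemma conj_pow_eq {G : Type*} [Group G] (g a : G) (k : ℕ) :
    (g * a * g⁻¹) ^ k = g * a ^ k * g⁻¹ := by
  induction k with
  | zero => simp
  | succ k ih => rw [pow_succ, pow_succ, ih]; group

def fX (n : ℕ) (i : Fin (n/2)) : BraidGroup n :=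
  sg n (2*i.1) ^ (n*(n-1)) * (fullTwist n)⁻¹

lemma two_mul_lt (i : Fin (n/2)) : 2*i.1 < n - 1 := by have := i.2; omega

lemma conj_fX (hn : 2 ≤ n) {g : BraidGroup n} {i k : Fin (n/2)}
    (hg : g * sg n (2*i.1) * g⁻¹ = sg n (2*k.1)) :
    g * fX n i * g⁻¹ = fX n k := by
  have hz : g * (fullTwist n)⁻¹ * g⁻¹ = (fullTwist n)⁻¹ := by
    have hcc : g * (fullTwist n)⁻¹ = (fullTwist n)⁻¹ * g :=
      ((fullTwist_central hn g).inv_left).eq.symm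
    rw [hcc, mul_assoc]
    simp
  have hp : g * sg n (2*i.1) ^ (n*(n-1)) * g⁻¹ = sg n (2*k.1) ^ (n*(n-1)) := by
    rw [← hg, conj_pow_eq]
  calc g * fX n i * g⁻¹
      = (g * sg n (2*i.1) ^ (n*(n-1)) * g⁻¹) * (g * (fullTwist n)⁻¹ * g⁻¹) := by
        rw [fX]; group
    _ = fX n k := by rw [hp, hz, fX]

def Realize (n : ℕ) (π : Equiv.Perm (Fin (n/2))) : Prop :=
  ∃ g : BraidGroup n, ∀ i, g * fX n i * g⁻¹ = fX n (π i)

lemma realize_one : Realize n 1 := ⟨1, fun i => by simp⟩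

lemma realize_mul {π ρ : Equiv.Perm (Fin (n/2))} (hπ : Realize n π) (hρ : Realize n ρ) :
    Realize n (π * ρ) := by
  obtain ⟨g, hg⟩ := hπ
  obtain ⟨h, hh⟩ := hρ
  refine ⟨g * h, fun i => ?_⟩
  have e1 : g * h * fX n i * (g*h)⁻¹ = g * (h * fX n i * h⁻¹) * g⁻¹ := by group
  rw [e1, hh, hg]
  rfl

lemma realize_swap_adj (hn : 2 ≤ n) (i : Fin (n/2)) (hi : i.1 + 1 < n/2) :
    Realize n (Equiv.swap i ⟨i.1+1, hi⟩) := by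
  have hmn : 2*i.1 + 4 ≤ n := by omega
  refine ⟨ww n (2*i.1), fun k => ?_⟩
  rcases eq_or_ne k i with rfl | hki
  · rw [Equiv.swap_apply_left]
    apply conj_fX hn
    show ww n (2*k.1) * sg n (2*k.1) * (ww n (2*k.1))⁻¹ = sg n (2*(k.1+1))
    rw [show 2*(k.1+1) = 2*k.1+2 by omega, ww_conj1 hmn, mul_assoc]
    simp
  rcases eq_or_ne k ⟨i.1+1, hi⟩ with rfl | hki'
  · rw [Equiv.swap_apply_right]
    apply conj_fX hn
    show ww n (2*i.1) * sg n (2*(i.1+1)) * (ww n (2*i.1))⁻¹ = sg n (2*i.1)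
    rw [show 2*(i.1+1) = 2*i.1+2 by omega, ww_conj2 hmn, mul_assoc]
    simp
  · rw [Equiv.swap_apply_of_ne_of_ne hki hki']
    apply conj_fX hn
    have hcm : Commute (ww n (2*i.1)) (sg n (2*k.1)) := by
      refine ww_comm_far ?_
      have h1 : k.1 ≠ i.1 := fun h => hki (Fin.ext h)
      have h2 : k.1 ≠ i.1+1 := fun h => hki' (Fin.ext h)
      omega
    rw [hcm.eq, mul_assoc]
    simp

lemma realize_swap (hn : 2 ≤ n) (x y : Fin (n/2)) (hxy : x ≠ y) :
    Realize n (Equiv.swap x y) := by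
  have aux : ∀ k (x y : Fin (n/2)), y.1 = x.1 + (k+1) → Realize n (Equiv.swap x y) := by
    intro k
    induction k with
    | zero =>
        intro x y hy
        have hx1 : x.1 + 1 < n/2 := by have := y.2; omega
        have hyx : y = ⟨x.1+1, hx1⟩ := by
          apply Fin.ext
          show y.1 = x.1+1
          omega
        rw [hyx]
        exact realize_swap_adj hn x hx1
    | succ k ih =>
        intro x y hy
        have hy1 : x.1 + (k+1) < n/2 := by have := y.2; omega
        set y' : Fin (n/2) := ⟨x.1 + (k+1), hy1⟩ with hy'def
        have hy'val : y'.1 = x.1 + (k+1) := rfl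
        have h1 : Realize n (Equiv.swap x y') := ih x y' rfl
        have hadj : y'.1 + 1 < n/2 := by rw [hy'val]; have := y.2; omega
        have h2 : Realize n (Equiv.swap y' y) := by
          have hyy : y = ⟨y'.1+1, hadj⟩ := by
            apply Fin.ext
            show y.1 = y'.1+1
            rw [hy'val]
            omega
          rw [hyy]
          exact realize_swap_adj hn y' hadj
        have hxy' : x ≠ y' := fun h => by
          have h' := congrArg Fin.val h
          rw [hy'val] at h'
          omega
        have hxy2 : x ≠ y := fun h => by
          have h' := congrArg Fin.val h
          omega
        have hkey : Equiv.swap y' y * Equiv.swap x y' * Equiv.swap y' y = Equiv.swap y x :=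
          Equiv.swap_mul_swap_mul_swap hxy' hxy2
        have hr := realize_mul (realize_mul h2 h1) h2
        rw [hkey, Equiv.swap_comm] at hr
        exact hr
  rcases Nat.lt_or_ge x.1 y.1 with h | h
  · exact aux (y.1 - x.1 - 1) x y (by omega)
  · have hne : x.1 ≠ y.1 := fun h' => hxy (Fin.ext h')
    have hr := aux (x.1 - y.1 - 1) y x (by omega)
    rwa [Equiv.swap_comm] at hr

lemma realize_all (hn : 2 ≤ n) (π : Equiv.Perm (Fin (n/2))) : Realize n π := by
  refine Equiv.Perm.swap_induction_on π realize_one ?_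
  intro f x y hxy hf
  exact realize_mul (realize_swap hn x y hxy) hf

lemma comm_sg2 {i j : Fin (n/2)} (h : i ≠ j) :
    Commute (sg n (2*i.1)) (sg n (2*j.1)) := by
  have hne : i.1 ≠ j.1 := fun h' => h (Fin.ext h')
  rcases Nat.lt_or_ge i.1 j.1 with h' | h'
  · exact sg_comm (by omega)
  · exact (sg_comm (by omega)).symm

lemma comm_fX (hn : 2 ≤ n) (i j : Fin (n/2)) : Commute (fX n i) (fX n j) := by
  rcases eq_or_ne i j with rfl | h
  · exact Commute.refl _
  have hzi : ∀ a : BraidGroup n, Commute a (fullTwist n)⁻¹ :=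
    fun a => ((fullTwist_central hn a).symm).inv_right
  have hA : Commute (sg n (2*i.1) ^ (n*(n-1))) (sg n (2*j.1) ^ (n*(n-1))) :=
    (comm_sg2 h).pow_pow _ _
  have h1 : Commute (sg n (2*i.1) ^ (n*(n-1))) (sg n (2*j.1) ^ (n*(n-1)) * (fullTwist n)⁻¹) :=
    hA.mul_right (hzi _)
  have h2 : Commute ((fullTwist n)⁻¹) (sg n (2*j.1) ^ (n*(n-1)) * (fullTwist n)⁻¹) :=
    ((hzi _).symm).mul_right (Commute.refl _)
  exact h1.mul_left h2

lemma comm_sg0_fX (hn : 2 ≤ n) (i : Fin (n/2)) : Commute (sg n 0) (fX n i) := by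
  have hbase : Commute (sg n 0) (sg n (2*i.1)) := by
    rcases Nat.eq_zero_or_pos i.1 with h0 | h0
    · rw [show 2*i.1 = 0 by omega]
    · exact sg_comm (by omega)
  exact (hbase.pow_right _).mul_right (((fullTwist_central hn (sg n 0)).symm).inv_right)

lemma deg_fX (hn : 2 ≤ n) (i : Fin (n/2)) : deg n (fX n i) = 1 := by
  rw [fX, map_mul, map_pow, map_inv, deg_sg (two_mul_lt i), deg_fullTwist,
    ← ofAdd_nsmul, ← ofAdd_neg, ← ofAdd_add]
  have hc : (n*(n-1)) • (1:ℤ) + -((n:ℤ)*((n:ℤ)-1)) = 0 := by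
    have h1 : ((n*(n-1) : ℕ) : ℤ) = (n:ℤ)*((n:ℤ)-1) := by
      push_cast [Nat.cast_sub (by omega : 1 ≤ n)]
      ring
    simp [nsmul_eq_mul, h1]
  rw [hc, ofAdd_zero]

end BraidAux


/-- For `n ≥ 2`, the set `Z_n = {σ_1^{n(n-1)} z⁻¹, σ_3^{n(n-1)} z⁻¹, …}`
(indexed over the odd generators) lies in `B_n'` and is a totally symmetric
subset of `B_n'`. -/
theorem stmt12 (n : ℕ) (hn : 2 ≤ n) :
    (∀ i : Fin (n / 2),
      σ (n := n) ⟨2 * i.1, by have := i.2; omega⟩ ^ (n * (n - 1)) * (fullTwist n)⁻¹ ∈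
        commutator (BraidGroup n)) ∧
    IsTotallySymmetricWrt
      (Set.range fun i : Fin (n / 2) =>
        σ (n := n) ⟨2 * i.1, by have := i.2; omega⟩ ^ (n * (n - 1)) * (fullTwist n)⁻¹)
      (commutator (BraidGroup n)) := by
  classical
  have hF : (fun i : Fin (n / 2) =>
      σ (n := n) ⟨2 * i.1, by have := i.2; omega⟩ ^ (n * (n - 1)) * (fullTwist n)⁻¹)
      = BraidAux.fX n := by
    funext i
    rw [BraidAux.fX, BraidAux.sg_eq _ (BraidAux.two_mul_lt i)]
  constructor
  · intro i
    have hFi : σ (n := n) ⟨2 * i.1, by have := i.2; omega⟩ ^ (n * (n - 1)) * (fullTwist n)⁻¹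
        = BraidAux.fX n i := congrFun hF i
    rw [hFi]
    exact BraidAux.mem_commutator_of_deg_one hn _ (BraidAux.deg_fX hn i)
  · rw [hF]
    constructor
    · rintro x ⟨i, rfl⟩ y ⟨j, rfl⟩
      exact BraidAux.comm_fX hn i j
    · intro τ
      set Fc : Fin (n/2) → ↥(Set.range (BraidAux.fX n)) :=
        fun i => ⟨BraidAux.fX n i, Set.mem_range_self i⟩ with hFcdef
      have hFcsurj : Function.Surjective Fc := by
        rintro ⟨x, i, rfl⟩
        exact ⟨i, rfl⟩
      set s := Function.surjInv hFcsurj with hsdef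
      have hsec : ∀ x, Fc (s x) = x := Function.surjInv_eq hFcsurj
      have hsinj : Function.Injective s := Function.injective_surjInv hFcsurj
      set p : Fin (n/2) → Prop := fun i => i ∈ Set.range s with hp
      have hjmem : ∀ r : {i // p i}, p (s (τ (Fc r.1))) := fun r => ⟨_, rfl⟩
      set e0 : {i // p i} → {i // p i} := fun r => ⟨s (τ (Fc r.1)), hjmem r⟩ with he0def
      have he0inj : Function.Injective e0 := by
        rintro ⟨r1, hr1⟩ ⟨r2, hr2⟩ h
        obtain ⟨x1, hx1⟩ := hr1
        obtain ⟨x2, hx2⟩ := hr2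
        have h' : s (τ (Fc r1)) = s (τ (Fc r2)) := congrArg Subtype.val h
        have h2 := τ.injective (hsinj h')
        apply Subtype.ext
        show r1 = r2
        rw [← hx1, ← hx2]
        congr 1
        have e1 : Fc (s x1) = Fc (s x2) := by rw [← hx1, ← hx2] at h2; exact h2
        rw [hsec, hsec] at e1
        exact e1
      have he0bij := Finite.injective_iff_bijective.mp he0inj
      set e' := Equiv.ofBijective e0 he0bij with he'def
      set π := Equiv.Perm.extendDomain e' (Equiv.refl {i // p i}) with hπdef
      have hπ : ∀ x, π (s x) = s (τ x) := by
        intro x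
        have hpx : p (s x) := ⟨x, rfl⟩
        rw [hπdef, Equiv.Perm.extendDomain_apply_subtype _ _ hpx]
        show (e0 ⟨s x, hpx⟩ : Fin (n/2)) = s (τ x)
        show s (τ (Fc (s x))) = s (τ x)
        rw [hsec]
      obtain ⟨g, hg⟩ := BraidAux.realize_all hn π
      set e : ℤ := Multiplicative.toAdd (BraidAux.deg n g) with hedef
      set g' := g * (BraidAux.sg n 0) ^ (-e) with hg'def
      have hdeg' : BraidAux.deg n g' = 1 := by
        rw [hg'def, map_mul, map_zpow, BraidAux.deg_sg (by omega : (0:ℕ) < n - 1),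
          ← ofAdd_toAdd (BraidAux.deg n g), ← hedef, ← ofAdd_zsmul, ← ofAdd_add]
        norm_num
      have hreal' : ∀ i, g' * BraidAux.fX n i * g'⁻¹ = BraidAux.fX n (π i) := by
        intro i
        have hc : Commute ((BraidAux.sg n 0) ^ (-e)) (BraidAux.fX n i) :=
          (BraidAux.comm_sg0_fX hn i).zpow_left _
        have h1 : (BraidAux.sg n 0) ^ (-e) * BraidAux.fX n i * ((BraidAux.sg n 0) ^ (-e))⁻¹
            = BraidAux.fX n i := by
          rw [hc.eq]
          exact mul_inv_cancel_right _ _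
        calc g' * BraidAux.fX n i * g'⁻¹
            = g * ((BraidAux.sg n 0)^(-e) * BraidAux.fX n i * ((BraidAux.sg n 0)^(-e))⁻¹) * g⁻¹ := by
              rw [hg'def]; group
          _ = g * BraidAux.fX n i * g⁻¹ := by rw [h1]
          _ = _ := hg i
      refine ⟨g', BraidAux.mem_commutator_of_deg_one hn g' hdeg', fun x => ?_⟩
      have hx : (x : BraidGroup n) = BraidAux.fX n (s x) := (congrArg Subtype.val (hsec x)).symm
      have hτx : (τ x : BraidGroup n) = BraidAux.fX n (s (τ x)) :=
        (congrArg Subtype.val (hsec (τ x))).symm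
      rw [hx, hτx, ← hπ x]
      exact hreal' (s x)
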